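/- arXiv:2510.15479 — 2 statements merged into one kernel-verified Lean document; each statement's English description precedes it below -/
import Mathlib

section
/- Let 𝒳 and 𝒯 be measurable spaces, π a probability measure on 𝒯, (p_t)_{t∈𝒯} a Markov kernel assigning to each t a probability measure p_t on 𝒳, and for each t let φ_t : 𝒳 → ℝ be a bounded measurable loss profile. Suppose there exist λ > 0 and a class F of bounded measurable functions on 𝒳 such that φ_t/λ lies in the convex hull of F for every t ∈ 𝒯. Then for every t ∈ 𝒯, |R_t^{CF} − R_t^F| ≤ λ ∫ IPM_F(p_{t'}, p_t) π(dt'), where R_t^F := ∫ φ_t dp_t and R_t^{CF} := ∫∫ φ_t(x) p_{t'}(dx) π(dt'). -/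
open MeasureTheory ProbabilityTheory
open scoped ENNReal

/-- The integral probability metric associated with a function class `F`:
`IPM_F(q, p) := sup_{f ∈ F} |∫ f dq − ∫ f dp|` (valued in `ℝ≥0∞`). -/
noncomputable def IPM {𝒳 : Type*} [MeasurableSpace 𝒳] (F : Set (𝒳 → ℝ))
    (q p : Measure 𝒳) : ℝ≥0∞ :=
  ⨆ f ∈ F, ENNReal.ofReal |(∫ x, f x ∂q) - ∫ x, f x ∂p|

lemma integrable_of_abs_le' {𝒳 : Type*} [MeasurableSpace 𝒳] {f : 𝒳 → ℝ} {μ : Measure 𝒳}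
    [IsFiniteMeasure μ] (hm : Measurable f) {C : ℝ} (hC : ∀ x, |f x| ≤ C) :
    Integrable f μ :=
  (integrable_const C).mono' hm.aestronglyMeasurable (ae_of_all _ fun x => by
    simpa [Real.norm_eq_abs] using hC x)

lemma convexHull_integral_diff_le {𝒳 : Type*} [MeasurableSpace 𝒳] (F : Set (𝒳 → ℝ))
    (hF : ∀ f ∈ F, Measurable f ∧ ∃ C : ℝ, ∀ x, |f x| ≤ C)
    (q p : Measure 𝒳) [IsProbabilityMeasure q] [IsProbabilityMeasure p]
    {g : 𝒳 → ℝ} (hg : g ∈ convexHull ℝ F) :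
    ENNReal.ofReal |(∫ x, g x ∂q) - ∫ x, g x ∂p| ≤ IPM F q p := by
  set S : Set (𝒳 → ℝ) := {h | Integrable h q ∧ Integrable h p ∧
    ENNReal.ofReal |(∫ x, h x ∂q) - ∫ x, h x ∂p| ≤ IPM F q p} with hS_def
  have hFS : F ⊆ S := by
    intro f hf
    obtain ⟨hm, C, hC⟩ := hF f hf
    refine ⟨integrable_of_abs_le' hm hC, integrable_of_abs_le' hm hC, ?_⟩
    exact le_iSup₂ (f := fun f (_ : f ∈ F) =>
      ENNReal.ofReal |(∫ x, f x ∂q) - ∫ x, f x ∂p|) f hf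
  have hS : Convex ℝ S := by
    rintro f ⟨hfq, hfp, hfI⟩ h ⟨hhq, hhp, hhI⟩ a b ha hb hab
    have h1q : Integrable (a • f + b • h) q := (hfq.smul a).add (hhq.smul b)
    have h1p : Integrable (a • f + b • h) p := (hfp.smul a).add (hhp.smul b)
    refine ⟨h1q, h1p, ?_⟩
    have hIq : (∫ x, (a • f + b • h) x ∂q) = a * (∫ x, f x ∂q) + b * ∫ x, h x ∂q := by
      simp only [Pi.add_apply, Pi.smul_apply, smul_eq_mul]
      rw [integral_add (hfq.const_mul a) (hhq.const_mul b),
        integral_const_mul, integral_const_mul]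
    have hIp : (∫ x, (a • f + b • h) x ∂p) = a * (∫ x, f x ∂p) + b * ∫ x, h x ∂p := by
      simp only [Pi.add_apply, Pi.smul_apply, smul_eq_mul]
      rw [integral_add (hfp.const_mul a) (hhp.const_mul b),
        integral_const_mul, integral_const_mul]
    rw [hIq, hIp]
    have habs : |a * (∫ x, f x ∂q) + b * (∫ x, h x ∂q)
        - (a * (∫ x, f x ∂p) + b * ∫ x, h x ∂p)|
        ≤ a * |(∫ x, f x ∂q) - ∫ x, f x ∂p| + b * |(∫ x, h x ∂q) - ∫ x, h x ∂p| := by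
      have : a * (∫ x, f x ∂q) + b * (∫ x, h x ∂q)
          - (a * (∫ x, f x ∂p) + b * ∫ x, h x ∂p)
          = a * ((∫ x, f x ∂q) - ∫ x, f x ∂p) + b * ((∫ x, h x ∂q) - ∫ x, h x ∂p) := by
        ring
      rw [this]
      calc _ ≤ |a * ((∫ x, f x ∂q) - ∫ x, f x ∂p)| + |b * ((∫ x, h x ∂q) - ∫ x, h x ∂p)| :=
            abs_add_le _ _
        _ = _ := by rw [abs_mul, abs_mul, abs_of_nonneg ha, abs_of_nonneg hb]
    calc ENNReal.ofReal _ ≤ ENNReal.ofReal (a * |(∫ x, f x ∂q) - ∫ x, f x ∂p|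
            + b * |(∫ x, h x ∂q) - ∫ x, h x ∂p|) := ENNReal.ofReal_le_ofReal habs
      _ ≤ ENNReal.ofReal (a * |(∫ x, f x ∂q) - ∫ x, f x ∂p|)
            + ENNReal.ofReal (b * |(∫ x, h x ∂q) - ∫ x, h x ∂p|) := ENNReal.ofReal_add_le
      _ = ENNReal.ofReal a * ENNReal.ofReal |(∫ x, f x ∂q) - ∫ x, f x ∂p|
            + ENNReal.ofReal b * ENNReal.ofReal |(∫ x, h x ∂q) - ∫ x, h x ∂p| := by
            rw [ENNReal.ofReal_mul ha, ENNReal.ofReal_mul hb]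
      _ ≤ ENNReal.ofReal a * IPM F q p + ENNReal.ofReal b * IPM F q p := by
            gcongr
      _ = (ENNReal.ofReal a + ENNReal.ofReal b) * IPM F q p := by ring
      _ = 1 * IPM F q p := by
            rw [← ENNReal.ofReal_add ha hb, hab, ENNReal.ofReal_one]
      _ = IPM F q p := one_mul _
  exact ((convexHull_min hFS hS) hg).2.2

/-- For a Markov kernel `(p_t)` of covariate laws, bounded measurable loss profiles `φ_t`
with `φ_t/λ` in the convex hull of a class `F` of bounded measurable functions, the per-arm
counterfactual/factual risk gap satisfies
`|R_t^{CF} − R_t^F| ≤ λ ∫ IPM_F(p_{t'}, p_t) π(dt')`, where `R_t^F = ∫ φ_t dp_t` and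
`R_t^{CF} = ∫∫ φ_t(x) p_{t'}(dx) π(dt')`. -/
theorem perArm_cf_risk_gap_le {𝒳 𝒯 : Type*} [MeasurableSpace 𝒳] [MeasurableSpace 𝒯]
    (π : Measure 𝒯) [IsProbabilityMeasure π]
    (p : Kernel 𝒯 𝒳) [IsMarkovKernel p]
    (φ : 𝒯 → 𝒳 → ℝ)
    (hφm : ∀ t, Measurable (φ t)) (hφb : ∀ t, ∃ C : ℝ, ∀ x, |φ t x| ≤ C)
    (F : Set (𝒳 → ℝ))
    (hF : ∀ f ∈ F, Measurable f ∧ ∃ C : ℝ, ∀ x, |f x| ≤ C)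
    (lam : ℝ) (hlam : 0 < lam)
    (hconv : ∀ t, (fun x => φ t x / lam) ∈ convexHull ℝ F) :
    ∀ t, ENNReal.ofReal |(∫ t', ∫ x, φ t x ∂(p t') ∂π) - ∫ x, φ t x ∂(p t)|
      ≤ ENNReal.ofReal lam * ∫⁻ t', IPM F (p t') (p t) ∂π := by
  intro t
  obtain ⟨C, hC⟩ := hφb t
  set g : 𝒯 → ℝ := fun t' => ∫ x, φ t x ∂(p t') with hg_def
  set c : ℝ := ∫ x, φ t x ∂(p t) with hc_def
  -- pointwise bound
  have key : ∀ t', ENNReal.ofReal |g t' - c| ≤ ENNReal.ofReal lam * IPM F (p t') (p t) := by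
    intro t'
    have h1 := convexHull_integral_diff_le F hF (p t') (p t) (hconv t)
    have h2 : (∫ x, φ t x / lam ∂(p t')) = g t' / lam := integral_div lam _
    have h3 : (∫ x, φ t x / lam ∂(p t)) = c / lam := integral_div lam _
    rw [h2, h3] at h1
    have h4 : g t' / lam - c / lam = (g t' - c) / lam := by ring
    rw [h4, abs_div, abs_of_pos hlam] at h1
    have h5 : |g t' - c| = lam * (|g t' - c| / lam) := by
      field_simp
    rw [h5, ENNReal.ofReal_mul hlam.le]
    exact mul_le_mul_right h1 _
  -- measurability and boundedness of g
  have hgm : Measurable g := by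
    have : StronglyMeasurable fun q : 𝒯 × 𝒳 => φ t q.2 :=
      ((hφm t).comp measurable_snd).stronglyMeasurable
    exact this.integral_kernel_prod_right'.measurable
  have hgb : ∀ t', |g t'| ≤ C := by
    intro t'
    have : ‖∫ x, φ t x ∂(p t')‖ ≤ C * ((p t') Set.univ).toReal := by
      refine norm_integral_le_of_norm_le_const (ae_of_all _ fun x => ?_)
      simpa [Real.norm_eq_abs] using hC x
    simpa [Real.norm_eq_abs] using this
  have hg_int : Integrable g π := integrable_of_abs_le' hgm hgb
  have hsub : (∫ t', g t' ∂π) - c = ∫ t', (g t' - c) ∂π := by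
    rw [integral_sub hg_int (integrable_const c), integral_const]
    simp
  rw [show |(∫ t', ∫ x, φ t x ∂(p t') ∂π) - ∫ x, φ t x ∂(p t)| = |∫ t', (g t' - c) ∂π| from
    by rw [← hsub]]
  have habs : |∫ t', (g t' - c) ∂π| ≤ ∫ t', |g t' - c| ∂π := by
    simpa [Real.norm_eq_abs] using norm_integral_le_integral_norm (fun t' => g t' - c) (μ := π)
  have hsub_int : Integrable (fun t' => g t' - c) π := hg_int.sub (integrable_const c)
  calc ENNReal.ofReal |∫ t', (g t' - c) ∂π|
      ≤ ENNReal.ofReal (∫ t', |g t' - c| ∂π) := ENNReal.ofReal_le_ofReal habs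
    _ = ∫⁻ t', ENNReal.ofReal |g t' - c| ∂π :=
        ofReal_integral_eq_lintegral_ofReal hsub_int.abs (ae_of_all _ fun _ => abs_nonneg _)
    _ ≤ ∫⁻ t', ENNReal.ofReal lam * IPM F (p t') (p t) ∂π := lintegral_mono key
    _ = ENNReal.ofReal lam * ∫⁻ t', IPM F (p t') (p t) ∂π :=
        lintegral_const_mul' _ _ ENNReal.ofReal_ne_top
end

section
/- (PAC-Bayes generalization bound.) Let (H, ℋ) be a measurable space of hypotheses, D a probability measure on a data space 𝒳, and ℓ : H × 𝒳 → [0,1] a jointly measurable loss. Let R be a fixed (prior) probability measure on H, let X₁, …, X_n be i.i.d. with law D, and fix δ ∈ (0,1). Then with probability at least 1 − δ over the sample, simultaneously for every probability measure Q on H with KL(Q ‖ R) < ∞: | E_{h∼Q} E_{x∼D}[ℓ(h,x)] − (1/n) Σ_{i=1}^n E_{h∼Q}[ℓ(h, X_i)] | ≤ √( 2 ( KL(Q ‖ R) + log(2√n / δ) ) / n ). -/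
open MeasureTheory
open scoped ENNReal Classical

/-- Kullback–Leibler divergence `KL(Q ‖ R)`, valued in `ℝ≥0∞`: equal to
`∫ log (dQ/dR) dQ` when `Q ≪ R` and the log-likelihood ratio is `Q`-integrable,
and `∞` otherwise. -/
noncomputable def klDiv {α : Type*} [MeasurableSpace α] (μ ν : Measure α) : ℝ≥0∞ :=
  if μ ≪ ν ∧ Integrable (llr μ ν) μ then ENNReal.ofReal (∫ x, llr μ ν x ∂μ) else ⊤

/-!
For a fixed hypothesis `h` the generalization gap `L(h) - L̂(h)` is an average of `n` independent
centred `[0,1]`-bounded variables, hence sub-Gaussian with variance proxy `1/(4n)` (Hoeffding's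
lemma). Writing `exp (s d²)` as a Gaussian average of `exp (2 s d a)` turns this into
`E exp (n/2 · gap²) ≤ 2`. Integrating against the prior `R` and applying Markov's inequality,
with probability at least `1 - δ` the sample satisfies `E_R exp (n/2 · gap²) ≤ 2√n/δ`.
On that event the Donsker–Varadhan inequality gives, for every posterior `Q` simultaneously,
`n/2 · E_Q gap² ≤ KL(Q‖R) + log (2√n/δ)`, and Jensen's `(E_Q gap)² ≤ E_Q gap²` concludes.
-/

open Real ProbabilityTheory
open scoped NNReal

lemma lintegral_exp_neg_mul_sq_add_mul {s : ℝ} (hs : 0 < s) (d : ℝ) :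
    ∫⁻ a : ℝ, ENNReal.ofReal (exp (-s * a ^ 2 + 2 * s * d * a))
      = ENNReal.ofReal (√(π / s) * exp (s * d ^ 2)) := by
  have hsq (a : ℝ) :
      exp (-s * a ^ 2 + 2 * s * d * a) = exp (s * d ^ 2) * exp (-s * (a - d) ^ 2) := by
    rw [← exp_add]
    ring_nf
  simp_rw [hsq]
  rw [← ofReal_integral_eq_lintegral_ofReal
      (((integrable_exp_neg_mul_sq hs).comp_sub_right d).const_mul _)
      (ae_of_all _ fun a => by positivity),
    integral_const_mul, integral_sub_right_eq_self (fun a => exp (-s * a ^ 2)) d,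
    integral_gaussian, mul_comm]

namespace ProbabilityTheory.HasSubgaussianMGF
variable {Ω : Type*} [MeasurableSpace Ω] {μ : Measure Ω} {X : Ω → ℝ} {c : ℝ≥0}

lemma lintegral_exp_mul_le (hX : HasSubgaussianMGF X c μ) (t : ℝ) :
    ∫⁻ ω, ENNReal.ofReal (exp (t * X ω)) ∂μ ≤ ENNReal.ofReal (exp (c * t ^ 2 / 2)) := by
  rw [← ofReal_integral_eq_lintegral_ofReal (hX.integrable_exp_mul t)
    (ae_of_all _ fun ω => (exp_pos _).le)]
  exact ENNReal.ofReal_le_ofReal (hX.mgf_le t)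

/-- Since `exp (s d²)` is a Gaussian average of `exp (2 s d a)`, the moment generating
function bound integrates to a bound on `E exp (s X²)`. -/
lemma lintegral_exp_mul_sq_le (hX : HasSubgaussianMGF X c μ) {s : ℝ} (hs : 0 < s)
    (hcs : 2 * c * s < 1) :
    ∫⁻ ω, ENNReal.ofReal (exp (s * X ω ^ 2)) ∂μ ≤ ENNReal.ofReal (√(1 - 2 * c * s))⁻¹ := by
  have : IsFiniteMeasure μ :=
    (integrable_const_iff_isFiniteMeasure one_ne_zero).1 (by simpa using hX.integrable_exp_mul 0)
  have hb : 0 < s - 2 * c * s ^ 2 := by nlinarith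
  set k := √(s / π)
  have hlin (d : ℝ) : ENNReal.ofReal (exp (s * d ^ 2))
      = ENNReal.ofReal k * ∫⁻ a : ℝ, ENNReal.ofReal (exp (-s * a ^ 2 + 2 * s * d * a)) := by
    rw [lintegral_exp_neg_mul_sq_add_mul hs, ← ENNReal.ofReal_mul (sqrt_nonneg _), ← mul_assoc,
      ← sqrt_mul (by positivity), div_mul_div_cancel₀ pi_ne_zero, div_self hs.ne', sqrt_one,
      one_mul]
  have hmgf (a : ℝ) : ∫⁻ ω, ENNReal.ofReal (exp (-s * a ^ 2 + 2 * s * X ω * a)) ∂μ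
      ≤ ENNReal.ofReal (exp (-(s - 2 * c * s ^ 2) * a ^ 2)) := by
    calc _ = ENNReal.ofReal (exp (-s * a ^ 2))
          * ∫⁻ ω, ENNReal.ofReal (exp ((2 * s * a) * X ω)) ∂μ := by
          rw [← lintegral_const_mul' _ _ ENNReal.ofReal_ne_top]
          congr! 2 with ω
          rw [← ENNReal.ofReal_mul (exp_pos _).le, ← exp_add]
          ring_nf
      _ ≤ ENNReal.ofReal (exp (-s * a ^ 2)) * ENNReal.ofReal (exp (c * (2 * s * a) ^ 2 / 2)) := by
          gcongr
          exact hX.lintegral_exp_mul_le _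
      _ = _ := by
          rw [← ENNReal.ofReal_mul (exp_pos _).le, ← exp_add]
          ring_nf
  have hmeas : AEMeasurable (fun p : Ω × ℝ =>
      ENNReal.ofReal (exp (-s * p.2 ^ 2 + 2 * s * X p.1 * p.2))) (μ.prod volume) := by
    have hg : Measurable fun q : ℝ × ℝ =>
        ENNReal.ofReal (exp (-s * q.2 ^ 2 + 2 * s * q.1 * q.2)) := by
      fun_prop
    exact hg.comp_aemeasurable (f := fun p : Ω × ℝ => (X p.1, p.2))
      (hX.aemeasurable.comp_fst.prodMk measurable_snd.aemeasurable)
  calc ∫⁻ ω, ENNReal.ofReal (exp (s * X ω ^ 2)) ∂μ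
      = ENNReal.ofReal k * ∫⁻ ω, (∫⁻ a : ℝ,
          ENNReal.ofReal (exp (-s * a ^ 2 + 2 * s * X ω * a))) ∂μ := by
        simp_rw [hlin]
        rw [lintegral_const_mul' _ _ ENNReal.ofReal_ne_top]
    _ = ENNReal.ofReal k * ∫⁻ a : ℝ,
          ∫⁻ ω, ENNReal.ofReal (exp (-s * a ^ 2 + 2 * s * X ω * a)) ∂μ := by
        rw [lintegral_lintegral_swap hmeas]
    _ ≤ ENNReal.ofReal k * ∫⁻ a : ℝ, ENNReal.ofReal (exp (-(s - 2 * c * s ^ 2) * a ^ 2)) := by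
        gcongr with a
        exact hmgf a
    _ = ENNReal.ofReal k * ENNReal.ofReal √(π / (s - 2 * c * s ^ 2)) := by
        rw [← ofReal_integral_eq_lintegral_ofReal (integrable_exp_neg_mul_sq hb)
          (ae_of_all _ fun a => (exp_pos _).le), integral_gaussian]
    _ = ENNReal.ofReal (√(1 - 2 * c * s))⁻¹ := by
        rw [← ENNReal.ofReal_mul (sqrt_nonneg _), ← sqrt_mul (by positivity), ← sqrt_inv]
        congr 2
        field_simp

end ProbabilityTheory.HasSubgaussianMGF

lemma ProbabilityTheory.hasSubgaussianMGF_integral_sub_mean_pi {ι 𝒳 : Type*} [Fintype ι]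
    [Nonempty ι] [MeasurableSpace 𝒳] (D : Measure 𝒳) [IsProbabilityMeasure D] {g : 𝒳 → ℝ}
    (hg : AEMeasurable g D) {a b : ℝ} (hgab : ∀ᵐ x ∂D, g x ∈ Set.Icc a b) :
    HasSubgaussianMGF (fun xs : ι → 𝒳 => ∫ x, g x ∂D - (Fintype.card ι : ℝ)⁻¹ * ∑ i, g (xs i))
      ((‖b - a‖₊ / 2) ^ 2 / Fintype.card ι) (Measure.pi fun _ => D) := by
  have hY : HasSubgaussianMGF (fun x => g x - ∫ x, g x ∂D) ((‖b - a‖₊ / 2) ^ 2) D :=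
    hasSubgaussianMGF_of_mem_Icc hg hgab
  have hYi (i : ι) : HasSubgaussianMGF (fun xs : ι → 𝒳 => g (xs i) - ∫ x, g x ∂D)
      ((‖b - a‖₊ / 2) ^ 2) (Measure.pi fun _ => D) :=
    HasSubgaussianMGF.of_map (measurable_pi_apply i).aemeasurable
      (by rwa [(measurePreserving_eval (fun _ => D) i).map_eq])
  -- `NNReal.mk` here, since the subtype literal produced by `const_mul` defeats `NNReal.coe_mul`
  have hsum : HasSubgaussianMGF
      (fun xs : ι → 𝒳 => -(Fintype.card ι : ℝ)⁻¹ * ∑ i, (g (xs i) - ∫ x, g x ∂D))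
      (NNReal.mk ((-(Fintype.card ι : ℝ)⁻¹) ^ 2) (sq_nonneg _) * ∑ _i : ι, (‖b - a‖₊ / 2) ^ 2)
      (Measure.pi fun _ => D) := (HasSubgaussianMGF.sum_of_iIndepFun
    (iIndepFun_pi (fun _ => hg.sub_const _)) (s := Finset.univ) fun i _ => hYi i).const_mul
    (-(Fintype.card ι : ℝ)⁻¹)
  convert hsum using 1
  · ext xs
    rw [Finset.sum_sub_distrib, Finset.sum_const, Finset.card_univ, nsmul_eq_mul]
    field_simp
    ring
  · apply NNReal.eq
    simp only [NNReal.coe_div, NNReal.coe_mul, NNReal.coe_mk, NNReal.coe_pow,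
      coe_nnnorm, NNReal.coe_natCast, Finset.sum_const, Finset.card_univ, nsmul_eq_mul]
    field_simp

section KL
variable {α : Type*} [MeasurableSpace α] {μ ν : Measure α} [IsProbabilityMeasure μ]

lemma integral_le_integral_llr_add_log_integral_exp [SigmaFinite ν] (hμν : μ ≪ ν)
    (h_int : Integrable (llr μ ν) μ) {f : α → ℝ} (hfμ : Integrable f μ)
    (hfν : Integrable (fun x => exp (f x)) ν) :
    ∫ x, f x ∂μ ≤ ∫ x, llr μ ν x ∂μ + log (∫ x, exp (f x) ∂ν) := by
  have : NeZero ν := ⟨fun h => IsProbabilityMeasure.ne_zero μ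
    (Measure.absolutelyContinuous_zero_iff.1 (h ▸ hμν))⟩
  have : IsProbabilityMeasure (ν.tilted f) := isProbabilityMeasure_tilted hfν
  have hμt : μ ≪ ν.tilted f := hμν.trans (absolutelyContinuous_tilted hfν)
  have hgibbs := InformationTheory.integral_llr_add_sub_measure_univ_nonneg hμt
    (integrable_llr_tilted_right hμν hfμ h_int hfν)
  rw [integral_llr_tilted_right hμν hfμ hfν h_int] at hgibbs
  simp only [probReal_univ] at hgibbs
  linarith

lemma integral_le_toReal_klDiv_add_log_integral_exp [SigmaFinite ν] (hKL : klDiv μ ν ≠ ⊤)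
    {f : α → ℝ} (hfμ : Integrable f μ) (hfν : Integrable (fun x => exp (f x)) ν) :
    ∫ x, f x ∂μ ≤ (klDiv μ ν).toReal + log (∫ x, exp (f x) ∂ν) := by
  unfold klDiv at hKL ⊢
  split_ifs at hKL ⊢ with h
  · rw [ENNReal.toReal_ofReal']
    have := integral_le_integral_llr_add_log_integral_exp h.1 h.2 hfμ hfν
    linarith [le_max_left (∫ x, llr μ ν x ∂μ) 0]
  · exact absurd rfl hKL

lemma abs_integral_le_sqrt_of_lintegral_exp_mul_sq_le [IsProbabilityMeasure ν]
    (hKL : klDiv μ ν ≠ ⊤) {φ : α → ℝ} (hφ : Measurable φ) {B : ℝ} (hφB : ∀ x, |φ x| ≤ B)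
    {s C : ℝ} (hs : 0 < s) (hC : ∫⁻ x, ENNReal.ofReal (exp (s * φ x ^ 2)) ∂ν ≤ ENNReal.ofReal C) :
    |∫ x, φ x ∂μ| ≤ √(((klDiv μ ν).toReal + log C) / s) := by
  have hφ2B : ∀ x, φ x ^ 2 ∈ Set.Icc 0 (B ^ 2) := fun x =>
    ⟨sq_nonneg _, sq_le_sq' (abs_le.1 (hφB x)).1 (abs_le.1 (hφB x)).2⟩
  have hexp_int : Integrable (fun x => exp (s * φ x ^ 2)) ν :=
    Integrable.of_mem_Icc 0 (exp (s * B ^ 2)) (by fun_prop) (ae_of_all _ fun x =>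
      ⟨(exp_pos _).le, exp_le_exp.2 (mul_le_mul_of_nonneg_left (hφ2B x).2 hs.le)⟩)
  have hZ1 : 1 ≤ ∫ x, exp (s * φ x ^ 2) ∂ν := by
    simpa using integral_mono (integrable_const 1) hexp_int fun x =>
      one_le_exp (mul_nonneg hs.le (hφ2B x).1)
  have hZC : ∫ x, exp (s * φ x ^ 2) ∂ν ≤ C := by
    rw [← ofReal_integral_eq_lintegral_ofReal hexp_int (ae_of_all _ fun x => (exp_pos _).le),
      ENNReal.ofReal_le_ofReal_iff'] at hC
    exact hC.resolve_right (by linarith)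
  have hDV : s * ∫ x, φ x ^ 2 ∂μ ≤ (klDiv μ ν).toReal + log C := by
    rw [← integral_const_mul]
    refine (integral_le_toReal_klDiv_add_log_integral_exp hKL ?_ hexp_int).trans ?_
    · exact (Integrable.of_mem_Icc 0 (B ^ 2) (by fun_prop) (ae_of_all _ hφ2B)).const_mul s
    · exact add_le_add_right (log_le_log (by linarith) hZC) _
  have hjensen : (∫ x, φ x ∂μ) ^ 2 ≤ ∫ x, φ x ^ 2 ∂μ := by
    have hφ2 : MemLp φ 2 μ := MemLp.of_bound hφ.aestronglyMeasurable B (ae_of_all _ hφB)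
    have := variance_nonneg φ μ
    rw [variance_eq_sub hφ2] at this
    simpa using this
  rw [← sqrt_sq_eq_abs]
  exact sqrt_le_sqrt ((le_div_iff₀' hs).2 (by nlinarith))

end KL

lemma one_sub_div_le_measure_lintegral_lt {Ω Θ : Type*} [MeasurableSpace Ω]
    [MeasurableSpace Θ] {P : Measure Ω} [IsProbabilityMeasure P] {ν : Measure Θ}
    [IsProbabilityMeasure ν] {F : Ω → Θ → ℝ≥0∞} (hF : Measurable (Function.uncurry F))
    {B : ℝ≥0∞} (hB : ∀ θ, ∫⁻ ω, F ω θ ∂P ≤ B) {C : ℝ≥0∞} (hC0 : C ≠ 0) (hCtop : C ≠ ∞) :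
    1 - B / C ≤ P {ω | ∫⁻ θ, F ω θ ∂ν < C} := by
  have hZ : AEMeasurable (fun ω => ∫⁻ θ, F ω θ ∂ν) P := hF.lintegral_prod_right'.aemeasurable
  have hmean : ∫⁻ ω, ∫⁻ θ, F ω θ ∂ν ∂P ≤ B := by
    rw [lintegral_lintegral_swap hF.aemeasurable]
    calc _ ≤ ∫⁻ _, B ∂ν := lintegral_mono hB
      _ = B := by simp
  have hcompl : {ω | ∫⁻ θ, F ω θ ∂ν < C} = {ω | C ≤ ∫⁻ θ, F ω θ ∂ν}ᶜ := by ext; simp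
  rw [hcompl, prob_compl_eq_one_sub₀ (nullMeasurableSet_le aemeasurable_const hZ)]
  gcongr
  exact (meas_ge_le_lintegral_div hZ hC0 hCtop).trans (by gcongr)

lemma integral_mem_Icc_zero_one {α : Type*} [MeasurableSpace α] {μ : Measure α}
    [IsProbabilityMeasure μ] {f : α → ℝ} (h0 : ∀ x, 0 ≤ f x) (h1 : ∀ x, f x ≤ 1) :
    ∫ x, f x ∂μ ∈ Set.Icc 0 1 := by
  refine ⟨integral_nonneg h0, ?_⟩
  simpa using integral_mono_of_nonneg (ae_of_all _ h0) (integrable_const (1 : ℝ)) (ae_of_all μ h1)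

section GeneralizationGap
variable {H 𝒳 : Type*} [MeasurableSpace 𝒳] (D : Measure 𝒳) (ℓ : H → 𝒳 → ℝ) {n : ℕ}

noncomputable def generalizationGap (h : H) (xs : Fin n → 𝒳) : ℝ :=
  ∫ x, ℓ h x ∂D - (1 / n : ℝ) * ∑ i, ℓ h (xs i)

variable {D ℓ}

lemma measurable_generalizationGap [MeasurableSpace H] [SFinite D]
    (hℓm : Measurable fun p : H × 𝒳 => ℓ p.1 p.2) :
    Measurable fun p : H × (Fin n → 𝒳) => generalizationGap D ℓ p.1 p.2 := by
  have hrisk : Measurable fun h => ∫ x, ℓ h x ∂D :=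
    hℓm.stronglyMeasurable.integral_prod_right'.measurable
  refine (hrisk.comp measurable_fst).sub ((Finset.measurable_sum _ fun i _ => ?_).const_mul _)
  exact hℓm.comp (measurable_fst.prodMk ((measurable_pi_apply i).comp measurable_snd))

variable [IsProbabilityMeasure D] (hℓ0 : ∀ h x, 0 ≤ ℓ h x) (hℓ1 : ∀ h x, ℓ h x ≤ 1)
include hℓ0 hℓ1

lemma abs_generalizationGap_le_one (h : H) (xs : Fin n → 𝒳) :
    |generalizationGap D ℓ h xs| ≤ 1 := by
  have hrisk := integral_mem_Icc_zero_one (μ := D) (hℓ0 h) (hℓ1 h)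
  have hemp0 : 0 ≤ (1 / n : ℝ) * ∑ i, ℓ h (xs i) :=
    mul_nonneg (by positivity) (Finset.sum_nonneg fun i _ => hℓ0 h (xs i))
  have hemp1 : (1 / n : ℝ) * ∑ i, ℓ h (xs i) ≤ 1 := by
    rcases n.eq_zero_or_pos with rfl | hn
    · simp
    rw [one_div_mul_eq_div, div_le_one (by positivity)]
    simpa using Finset.sum_le_sum fun i (_ : i ∈ Finset.univ) => hℓ1 h (xs i)
  rw [generalizationGap, abs_le]
  constructor <;> linarith [hrisk.1, hrisk.2]

lemma hasSubgaussianMGF_generalizationGap (hn : 0 < n) {h : H} (hℓ : Measurable (ℓ h)) :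
    HasSubgaussianMGF (generalizationGap D ℓ h) (4 * n)⁻¹ (Measure.pi fun _ : Fin n => D) := by
  have : NeZero n := ⟨hn.ne'⟩
  convert hasSubgaussianMGF_integral_sub_mean_pi (ι := Fin n) D hℓ.aemeasurable
    (ae_of_all _ fun x => ⟨hℓ0 h x, hℓ1 h x⟩) using 1
  · ext xs
    simp [generalizationGap]
  · apply NNReal.eq
    simp
    ring

lemma lintegral_exp_mul_sq_generalizationGap_le_two (hn : 0 < n) {h : H}
    (hℓ : Measurable (ℓ h)) :
    ∫⁻ xs, ENNReal.ofReal (exp (n / 2 * generalizationGap D ℓ h xs ^ 2))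
      ∂(Measure.pi fun _ : Fin n => D) ≤ 2 := by
  have hcs : 2 * ((4 * n)⁻¹ : ℝ≥0) * (n / 2 : ℝ) = 1 / 4 := by
    push_cast
    field_simp
  refine ((hasSubgaussianMGF_generalizationGap hℓ0 hℓ1 hn hℓ).lintegral_exp_mul_sq_le
    (by positivity) (by rw [hcs]; norm_num)).trans ?_
  rw [hcs, ← ENNReal.ofReal_ofNat]
  refine ENNReal.ofReal_le_ofReal (inv_le_of_inv_le₀ (by norm_num) ?_)
  exact (le_sqrt' (by norm_num)).2 (by norm_num)

lemma integral_generalizationGap [MeasurableSpace H] (hℓm : Measurable fun p : H × 𝒳 => ℓ p.1 p.2)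
    (Q : Measure H) [IsProbabilityMeasure Q] (xs : Fin n → 𝒳) :
    ∫ h, generalizationGap D ℓ h xs ∂Q
      = ∫ h, ∫ x, ℓ h x ∂D ∂Q - (1 / n : ℝ) * ∑ i, ∫ h, ℓ h (xs i) ∂Q := by
  have hrisk : Integrable (fun h => ∫ x, ℓ h x ∂D) Q :=
    Integrable.of_mem_Icc 0 1 hℓm.stronglyMeasurable.integral_prod_right'.measurable.aemeasurable
      (ae_of_all _ fun h => integral_mem_Icc_zero_one (hℓ0 h) (hℓ1 h))
  have hloss (i : Fin n) : Integrable (fun h => ℓ h (xs i)) Q :=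
    Integrable.of_mem_Icc 0 1 (hℓm.comp measurable_prodMk_right).aemeasurable
      (ae_of_all _ fun h => ⟨hℓ0 h (xs i), hℓ1 h (xs i)⟩)
  simp only [generalizationGap]
  rw [integral_sub hrisk ((integrable_finsetSum _ fun i _ => hloss i).const_mul _),
    integral_const_mul, integral_finsetSum _ fun i _ => hloss i]

end GeneralizationGap

theorem pac_bayes_generalization_general {H 𝒳 : Type*} [MeasurableSpace H] [MeasurableSpace 𝒳]
    (D : Measure 𝒳) [IsProbabilityMeasure D]
    (ℓ : H → 𝒳 → ℝ) (hℓm : Measurable fun p : H × 𝒳 => ℓ p.1 p.2)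
    (hℓ0 : ∀ h x, 0 ≤ ℓ h x) (hℓ1 : ∀ h x, ℓ h x ≤ 1)
    (R : Measure H) [IsProbabilityMeasure R]
    (n : ℕ) (hn : 0 < n) (δ : ℝ) (hδ0 : 0 < δ) :
    ENNReal.ofReal (1 - δ)
      ≤ (Measure.pi fun _ : Fin n => D)
          {xs | ∀ Q : Measure H, IsProbabilityMeasure Q → klDiv Q R ≠ ⊤ →
            |(∫ h, ∫ x, ℓ h x ∂D ∂Q) - (1 / n : ℝ) * ∑ i : Fin n, ∫ h, ℓ h (xs i) ∂Q|
              ≤ Real.sqrt (2 * ((klDiv Q R).toReal + Real.log (2 * Real.sqrt n / δ)) / n)} := by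
  have hgap := measurable_generalizationGap (D := D) (n := n) hℓm
  have hF : Measurable (Function.uncurry fun (xs : Fin n → 𝒳) (h : H) =>
      ENNReal.ofReal (exp (n / 2 * generalizationGap D ℓ h xs ^ 2))) :=
    ENNReal.measurable_ofReal.comp
      (measurable_exp.comp (((hgap.comp measurable_swap).pow_const 2).const_mul _))
  have hC : 0 < 2 * √n / δ := by positivity
  have hconf : ENNReal.ofReal (1 - δ) ≤ 1 - 2 / ENNReal.ofReal (2 * √n / δ) := by
    rw [ENNReal.ofReal_sub _ hδ0.le, ENNReal.ofReal_one, ← ENNReal.ofReal_ofNat 2,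
      ← ENNReal.ofReal_div_of_pos hC, div_div_eq_mul_div, mul_div_mul_left _ _ two_ne_zero]
    gcongr
    exact div_le_self hδ0.le (one_le_sqrt.2 (by exact_mod_cast hn))
  refine hconf.trans ((one_sub_div_le_measure_lintegral_lt (ν := R) hF
    (fun h => lintegral_exp_mul_sq_generalizationGap_le_two hℓ0 hℓ1 hn
      (hℓm.comp measurable_prodMk_left)) (by simpa using hC) ENNReal.ofReal_ne_top).trans
    (measure_mono fun xs hxs Q _ hKL => ?_))
  rw [← integral_generalizationGap hℓ0 hℓ1 hℓm]
  convert abs_integral_le_sqrt_of_lintegral_exp_mul_sq_le hKL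
    (φ := fun h => generalizationGap D ℓ h xs) (hgap.comp measurable_prodMk_right)
    (abs_generalizationGap_le_one hℓ0 hℓ1 · xs) (by positivity) hxs.le using 2
  rw [div_div_eq_mul_div]
  ring

/-- PAC-Bayes generalization bound: for a `[0,1]`-valued loss, a prior `R` on hypotheses and
an i.i.d. sample `X₁, …, X_n ∼ D`, with probability at least `1 − δ` over the sample,
simultaneously for all posteriors `Q` with `KL(Q‖R) < ∞`,
`|E_{h∼Q} E_{x∼D} ℓ(h,x) − (1/n) Σᵢ E_{h∼Q} ℓ(h,Xᵢ)| ≤ √(2 (KL(Q‖R) + log(2√n/δ)) / n)`. -/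
theorem pac_bayes_generalization {H 𝒳 : Type*} [MeasurableSpace H] [MeasurableSpace 𝒳]
    (D : Measure 𝒳) [IsProbabilityMeasure D]
    (ℓ : H → 𝒳 → ℝ) (hℓm : Measurable fun p : H × 𝒳 => ℓ p.1 p.2)
    (hℓ0 : ∀ h x, 0 ≤ ℓ h x) (hℓ1 : ∀ h x, ℓ h x ≤ 1)
    (R : Measure H) [IsProbabilityMeasure R]
    (n : ℕ) (hn : 0 < n) (δ : ℝ) (hδ0 : 0 < δ) (hδ1 : δ < 1) :
    ENNReal.ofReal (1 - δ)
      ≤ (Measure.pi fun _ : Fin n => D)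
          {xs | ∀ Q : Measure H, IsProbabilityMeasure Q → klDiv Q R ≠ ⊤ →
            |(∫ h, ∫ x, ℓ h x ∂D ∂Q) - (1 / n : ℝ) * ∑ i : Fin n, ∫ h, ℓ h (xs i) ∂Q|
              ≤ Real.sqrt (2 * ((klDiv Q R).toReal + Real.log (2 * Real.sqrt n / δ)) / n)} :=
  pac_bayes_generalization_general D ℓ hℓm hℓ0 hℓ1 R n hn δ hδ0
end
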